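/- arXiv:0811.4234 — 5 statements merged into one kernel-verified Lean document; each statement's English description precedes it below -/
import Mathlib

section
/- The map π : L²([0,1],ℝ) × L²([0,1],ℂ) → L²([0,1],ℂ) given by π(f,ξ)(t) = e^{i f(t)} ξ(t) is jointly continuous. -/
/-!
Multiplication by the unimodular function `e^{if}` is a linear isometry of `Lᵖ`, so `π` is
1-Lipschitz in `ξ` uniformly in `f`, and it suffices to prove continuity in `f` for fixed `ξ`.
Since `|e^{ia} - e^{ib}| ≤ |a - b|`, the map `f ↦ e^{if} ξ` is `‖ξ‖_∞`-Lipschitz when `ξ` is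
bounded; a general `ξ` is approximated by simple functions, and by the isometry the
approximation is uniform in `f`.
-/

open MeasureTheory Complex ENNReal

theorem Complex.norm_exp_I_mul_ofReal_sub_exp_I_mul_ofReal_le (a b : ℝ) :
    ‖exp (I * a) - exp (I * b)‖ ≤ ‖a - b‖ := by
  have : exp (I * a) - exp (I * b) = exp (I * b) * (exp (I * ↑(a - b)) - 1) := by
    rw [mul_sub, ← exp_add]; push_cast; ring_nf
  rw [this, norm_mul, norm_exp_I_mul_ofReal, one_mul]
  exact Real.norm_exp_I_mul_ofReal_sub_one_le

namespace MeasureTheory.Lp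

variable {α : Type*} [MeasurableSpace α] {μ : Measure α} {p : ℝ≥0∞}

theorem memLp_exp_I_mul_mul (f : Lp ℝ p μ) (ξ : Lp ℂ p μ) :
    MemLp (fun t => exp (I * f t) * ξ t) p μ := by
  refine (Lp.memLp ξ).of_le ?_ (Filter.Eventually.of_forall fun t => ?_)
  · exact ((continuous_exp.comp (continuous_const.mul continuous_ofReal)).comp_aestronglyMeasurable
      (Lp.aestronglyMeasurable f)).mul (Lp.aestronglyMeasurable ξ)
  · simp only [norm_mul, norm_exp_I_mul_ofReal, one_mul, le_refl]

noncomputable def expIMul (f : Lp ℝ p μ) (ξ : Lp ℂ p μ) : Lp ℂ p μ :=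
  (memLp_exp_I_mul_mul f ξ).toLp _

theorem coeFn_expIMul (f : Lp ℝ p μ) (ξ : Lp ℂ p μ) :
    expIMul f ξ =ᵐ[μ] fun t => exp (I * f t) * ξ t :=
  MemLp.coeFn_toLp _

theorem expIMul_sub (f : Lp ℝ p μ) (ξ η : Lp ℂ p μ) :
    expIMul f (ξ - η) = expIMul f ξ - expIMul f η := by
  ext1
  filter_upwards [coeFn_expIMul f (ξ - η), coeFn_expIMul f ξ, coeFn_expIMul f η,
    Lp.coeFn_sub ξ η, Lp.coeFn_sub (expIMul f ξ) (expIMul f η)] with t h h₁ h₂ h₃ h₄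
  rw [h, h₄, Pi.sub_apply, h₁, h₂, h₃, Pi.sub_apply, mul_sub]

theorem norm_expIMul (f : Lp ℝ p μ) (ξ : Lp ℂ p μ) : ‖expIMul f ξ‖ = ‖ξ‖ := by
  have h : ∀ᵐ t ∂μ, ‖expIMul f ξ t‖ = ‖ξ t‖ := by
    filter_upwards [coeFn_expIMul f ξ] with t ht
    rw [ht, norm_mul, norm_exp_I_mul_ofReal, one_mul]
  rw [Lp.norm_def, Lp.norm_def, eLpNorm_congr_norm_ae h]

variable [Fact (1 ≤ p)]

theorem dist_expIMul_expIMul_right (f : Lp ℝ p μ) (ξ η : Lp ℂ p μ) :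
    dist (expIMul f ξ) (expIMul f η) = dist ξ η := by
  rw [_root_.dist_eq_norm, _root_.dist_eq_norm, ← expIMul_sub, norm_expIMul]

theorem lipschitzWith_expIMul_right (f : Lp ℝ p μ) : LipschitzWith 1 (expIMul f : Lp ℂ p μ → _) :=
  LipschitzWith.of_dist_le_mul fun ξ η => by simp [dist_expIMul_expIMul_right]

theorem lipschitzWith_expIMul_left {ξ : Lp ℂ p μ} {M : NNReal} (hξ : ∀ᵐ t ∂μ, ‖ξ t‖ ≤ M) :
    LipschitzWith M fun f : Lp ℝ p μ => expIMul f ξ := by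
  refine LipschitzWith.of_dist_le_mul fun f g => ?_
  rw [_root_.dist_eq_norm, _root_.dist_eq_norm]
  refine norm_le_mul_norm_of_ae_le_mul ?_
  filter_upwards [hξ, coeFn_expIMul f ξ, coeFn_expIMul g ξ, Lp.coeFn_sub f g,
    Lp.coeFn_sub (expIMul f ξ) (expIMul g ξ)] with t hξt h₁ h₂ h₃ h₄
  rw [h₄, h₃, Pi.sub_apply, Pi.sub_apply, h₁, h₂, ← sub_mul, norm_mul, mul_comm]
  exact mul_le_mul hξt (norm_exp_I_mul_ofReal_sub_exp_I_mul_ofReal_le _ _) (norm_nonneg _)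
    M.coe_nonneg

theorem continuous_expIMul_left (hp : p ≠ ∞) (ξ : Lp ℂ p μ) :
    Continuous fun f : Lp ℝ p μ => expIMul f ξ := by
  refine continuous_of_uniform_approx_of_continuous fun u hu => ?_
  obtain ⟨ε, hε, hεu⟩ := Metric.mem_uniformity_dist.1 hu
  obtain ⟨s, hs⟩ := Metric.denseRange_iff.1 (Lp.simpleFunc.denseRange hp) ξ ε hε
  obtain ⟨C, hC⟩ := (Lp.simpleFunc.toSimpleFunc s).exists_forall_norm_le
  have hsC : ∀ᵐ t ∂μ, ‖(s : Lp ℂ p μ) t‖ ≤ C.toNNReal := by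
    filter_upwards [Lp.simpleFunc.toSimpleFunc_eq_toFun s] with t ht
    exact ht ▸ (hC t).trans (Real.le_coe_toNNReal C)
  refine ⟨fun f => expIMul f s, (lipschitzWith_expIMul_left hsC).continuous, fun f => hεu ?_⟩
  rwa [dist_expIMul_expIMul_right]

theorem continuous_expIMul (hp : p ≠ ∞) :
    Continuous fun x : Lp ℝ p μ × Lp ℂ p μ => expIMul x.1 x.2 :=
  continuous_prod_of_continuous_lipschitzWith' _ 1 lipschitzWith_expIMul_right
    (continuous_expIMul_left hp)

end MeasureTheory.Lp

theorem stmt_3_general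
    (μ : Measure ℝ) :
    ∃ π : Lp ℝ 2 μ × Lp ℂ 2 μ → Lp ℂ 2 μ,
      (∀ p : Lp ℝ 2 μ × Lp ℂ 2 μ,
        (π p : ℝ → ℂ) =ᵐ[μ]
          fun t => Complex.exp (Complex.I * ((p.1 : ℝ → ℝ) t)) * (p.2 : ℝ → ℂ) t) ∧
      Continuous π :=
  ⟨_, fun x => Lp.coeFn_expIMul x.1 x.2, Lp.continuous_expIMul ofNat_ne_top⟩

theorem stmt_3
    (μ : Measure ℝ) (hμ : μ = volume.restrict (Set.Icc (0:ℝ) 1)) :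
    ∃ π : Lp ℝ 2 μ × Lp ℂ 2 μ → Lp ℂ 2 μ,
      (∀ p : Lp ℝ 2 μ × Lp ℂ 2 μ,
        (π p : ℝ → ℂ) =ᵐ[μ]
          fun t => Complex.exp (Complex.I * ((p.1 : ℝ → ℝ) t)) * (p.2 : ℝ → ℂ) t) ∧
      Continuous π :=
  stmt_3_general μ
end

section
/- Let M ⊆ [0,1] be a measurable set such that for every λ ∈ [0,1] the function t ↦ |t-λ|^{-1} χ_M(t) belongs to L²([0,1],ℂ). Then M has Lebesgue measure zero. -/
open MeasureTheory Metric Filter Topology ENNReal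

/-!
At a Lebesgue density point `x` of `s`, for all small `r > 0` the set `s ∩ [x - r, x + r]` has
measure at least `r`, and `|t - x|⁻ᵖ ≥ r⁻ᵖ` there. Hence `∫_s |t - x|⁻ᵖ ≥ r^(1-p)`, which tends to
`∞` as `r → 0` when `p > 1`. A set of positive measure has a density point in it, so it cannot
satisfy the hypothesis.
-/

theorem Besicovitch.exists_mem_tendsto_measure_inter_div {β : Type*} [MetricSpace β]
    [SecondCountableTopology β] [MeasurableSpace β] [BorelSpace β] [HasBesicovitchCovering β]
    (μ : Measure β) [IsLocallyFiniteMeasure μ] {s : Set β} (hs : MeasurableSet s) (h : μ s ≠ 0) :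
    ∃ x ∈ s, Tendsto (fun r => μ (s ∩ closedBall x r) / μ (closedBall x r)) (𝓝[>] 0) (𝓝 1) :=
  haveI := ae_restrict_neBot.2 h
  ((ae_restrict_mem hs).and (Besicovitch.ae_tendsto_measure_inter_div μ s)).exists

section DensityPoint

variable {s : Set ℝ} {x : ℝ}

theorem eventually_ofReal_le_volume_inter_closedBall
    (h : Tendsto (fun r => volume (s ∩ closedBall x r) / volume (closedBall x r)) (𝓝[>] 0) (𝓝 1)) :
    ∀ᶠ r in 𝓝[>] 0, ENNReal.ofReal r ≤ volume (s ∩ closedBall x r) := by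
  filter_upwards [h.eventually_const_lt (by norm_num : (2⁻¹ : ℝ≥0∞) < 1)] with r hr
  calc ENNReal.ofReal r = 2⁻¹ * volume (closedBall x r) := by
        rw [Real.volume_closedBall, ENNReal.ofReal_mul zero_le_two, ofReal_ofNat,
          ENNReal.inv_mul_cancel_left two_ne_zero ofNat_ne_top]
    _ ≤ volume (s ∩ closedBall x r) := (ENNReal.mul_lt_of_lt_div hr).le

theorem enorm_inv_rpow_mul_volume_inter_closedBall_le_setLIntegral (hs : MeasurableSet s)
    {p : ℝ} (hp : 0 ≤ p) {r : ℝ} (hr : 0 < r) :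
    ‖r⁻¹‖ₑ ^ p * volume (s ∩ closedBall x r) ≤ ∫⁻ t in s, ‖|t - x|⁻¹‖ₑ ^ p := by
  -- The centre is removed because `|x - x|⁻¹ = 0⁻¹ = 0` in Lean.
  have hbound : ∀ t ∈ (s ∩ closedBall x r) \ {x}, ‖r⁻¹‖ₑ ^ p ≤ ‖|t - x|⁻¹‖ₑ ^ p := by
    rintro t ⟨⟨-, htr⟩, htx⟩
    have hpos : 0 < |t - x| := abs_pos.2 (sub_ne_zero.2 htx)
    gcongr
    rw [Real.enorm_eq_ofReal (inv_nonneg.2 hr.le), Real.enorm_eq_ofReal (inv_nonneg.2 hpos.le)]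
    exact ENNReal.ofReal_le_ofReal (inv_anti₀ hpos (by rwa [mem_closedBall, Real.dist_eq] at htr))
  calc ‖r⁻¹‖ₑ ^ p * volume (s ∩ closedBall x r)
      = ‖r⁻¹‖ₑ ^ p * volume ((s ∩ closedBall x r) \ {x}) := by
        rw [measure_sdiff_null (measure_singleton x)]
    _ = ∫⁻ _ in (s ∩ closedBall x r) \ {x}, ‖r⁻¹‖ₑ ^ p := (setLIntegral_const _ _).symm
    _ ≤ ∫⁻ t in (s ∩ closedBall x r) \ {x}, ‖|t - x|⁻¹‖ₑ ^ p :=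
        setLIntegral_mono' ((hs.inter measurableSet_closedBall).diff (measurableSet_singleton x))
          hbound
    _ ≤ ∫⁻ t in s, ‖|t - x|⁻¹‖ₑ ^ p :=
        lintegral_mono_set (Set.sdiff_subset.trans Set.inter_subset_left)

theorem tendsto_enorm_inv_rpow_mul_ofReal {p : ℝ} (hp : 1 < p) :
    Tendsto (fun r : ℝ => ‖r⁻¹‖ₑ ^ p * ENNReal.ofReal r) (𝓝[>] 0) (𝓝 ∞) := by
  refine (ENNReal.tendsto_ofReal_atTop.comp (tendsto_rpow_neg_nhdsGT_zero (y := 1 - p)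
    (by linarith))).congr' ?_
  filter_upwards [self_mem_nhdsWithin] with r (hr : 0 < r)
  rw [Function.comp_apply, Real.enorm_eq_ofReal (inv_nonneg.2 hr.le),
    ENNReal.ofReal_rpow_of_nonneg (inv_nonneg.2 hr.le) (by linarith),
    ← ENNReal.ofReal_mul (by positivity), Real.inv_rpow hr.le, Real.rpow_sub hr, Real.rpow_one,
    div_eq_inv_mul]

theorem setLIntegral_enorm_inv_abs_sub_rpow_eq_top (hs : MeasurableSet s) {p : ℝ} (hp : 1 < p)
    (h : Tendsto (fun r => volume (s ∩ closedBall x r) / volume (closedBall x r)) (𝓝[>] 0) (𝓝 1)) :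
    ∫⁻ t in s, ‖|t - x|⁻¹‖ₑ ^ p = ∞ := by
  refine top_le_iff.1 (le_of_tendsto (tendsto_enorm_inv_rpow_mul_ofReal hp) ?_)
  filter_upwards [eventually_ofReal_le_volume_inter_closedBall h, self_mem_nhdsWithin]
    with r hvol (hr : 0 < r)
  exact (mul_le_mul_right hvol _).trans
    (enorm_inv_rpow_mul_volume_inter_closedBall_le_setLIntegral hs (by linarith) hr)

theorem not_memLp_inv_abs_sub_of_tendsto_density (hs : MeasurableSet s) {p : ℝ≥0∞} (hp : 1 < p)
    (hp_top : p ≠ ∞)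
    (h : Tendsto (fun r => volume (s ∩ closedBall x r) / volume (closedBall x r)) (𝓝[>] 0) (𝓝 1)) :
    ¬ MemLp (fun t => |t - x|⁻¹) p (volume.restrict s) := fun hf => by
  have hp_real : 1 < p.toReal := by
    simpa using (ENNReal.toReal_lt_toReal one_ne_top hp_top).2 hp
  exact (lintegral_rpow_enorm_lt_top_of_eLpNorm_lt_top (zero_lt_one.trans hp).ne' hp_top
    hf.eLpNorm_lt_top).ne (setLIntegral_enorm_inv_abs_sub_rpow_eq_top hs hp_real h)

end DensityPoint

theorem stmt_11
    (μ : Measure ℝ) (hμ : μ = volume.restrict (Set.Icc (0:ℝ) 1))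
    (M : Set ℝ) (hMmeas : MeasurableSet M) (hMsub : M ⊆ Set.Icc (0:ℝ) 1)
    (hL2 : ∀ lam ∈ Set.Icc (0:ℝ) 1,
      MemLp (fun t => M.indicator (fun t => |t - lam|⁻¹) t) 2 μ) :
    volume M = 0 := by
  by_contra hM
  obtain ⟨lam, hlamM, hlam⟩ :=
    Besicovitch.exists_mem_tendsto_measure_inter_div volume hMmeas hM
  have hrestrict : μ.restrict M = volume.restrict M := by
    rw [hμ, Measure.restrict_restrict hMmeas, Set.inter_eq_left.2 hMsub]
  have hf := (memLp_indicator_iff_restrict hMmeas).1 (hL2 lam (hMsub hlamM))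
  rw [hrestrict] at hf
  exact not_memLp_inv_abs_sub_of_tendsto_density hMmeas one_lt_two ofNat_ne_top hlam hf
end

section
/- If ξ ∈ L²([0,1],ℂ) satisfies that for every λ ∈ [0,1] the function t ↦ |t-λ|^{-1} ξ(t) belongs to L²([0,1],ℂ), then ξ = 0 almost everywhere. -/
open MeasureTheory Metric Filter Set Topology
open scoped ENNReal

/-!
If `ξ` were not a.e. zero, `‖ξ‖ ≥ ε` on a set `S ⊆ [0,1]` of positive measure. At a Lebesgue
density point `λ` of `S`, the set `S` fills at least half of every small interval
`[λ - r, λ + r]`, on which `|t - λ|⁻²` is at least `r⁻²`; so `∫_S |t - λ|⁻² dt ≳ r⁻¹` for all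
small `r`, and `t ↦ |t - λ|⁻¹ ξ(t)` cannot be square integrable.
-/

theorem exists_measure_setOf_le_enorm_ne_zero {α E : Type*} [MeasurableSpace α] {μ : Measure α}
    [NormedAddCommGroup E] {f : α → E} (hf : ¬f =ᵐ[μ] 0) :
    ∃ ε : ℝ≥0∞, ε ≠ 0 ∧ μ {x | ε ≤ ‖f x‖ₑ} ≠ 0 := by
  by_contra! h
  have hcover : {x | f x ≠ 0} ⊆ ⋃ n : ℕ, {x | (n : ℝ≥0∞)⁻¹ ≤ ‖f x‖ₑ} := fun x hx =>
    mem_iUnion.2 ((ENNReal.exists_inv_nat_lt (enorm_ne_zero.2 hx)).imp fun _ => le_of_lt)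
  exact hf <| ae_iff.2 <| measure_mono_null hcover <|
    measure_iUnion_null fun n => h _ (ENNReal.inv_ne_zero.2 (ENNReal.natCast_ne_top n))

theorem enorm_abs_sub_inv_smul {E : Type*} [NormedAddCommGroup E] [NormedSpace ℝ E]
    {t x : ℝ} (h : t ≠ x) (z : E) :
    ‖(|t - x|⁻¹ : ℝ) • z‖ₑ = (edist t x)⁻¹ * ‖z‖ₑ := by
  rw [enorm_smul, enorm_inv (abs_ne_zero.2 (sub_ne_zero.2 h)), Real.enorm_abs, edist_eq_enorm_sub]

theorem mul_setLIntegral_inv_edist_sq_le {E : Type*} [NormedAddCommGroup E] [NormedSpace ℝ E]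
    {μ : Measure ℝ} [NullSingletonClass μ] {S : Set ℝ} (hS : MeasurableSet S) {f : ℝ → E} {ε : ℝ≥0∞}
    (hf : ∀ t ∈ S, ε ≤ ‖f t‖ₑ) (x : ℝ) :
    ε ^ 2 * ∫⁻ t in S, (edist t x)⁻¹ ^ 2 ∂μ ≤ ∫⁻ t in S, ‖(|t - x|⁻¹ : ℝ) • f t‖ₑ ^ 2 ∂μ :=
  calc ε ^ 2 * ∫⁻ t in S, (edist t x)⁻¹ ^ 2 ∂μ
      ≤ ∫⁻ t in S, ((edist t x)⁻¹ * ε) ^ 2 ∂μ := by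
        simp_rw [mul_pow, mul_comm _ (ε ^ 2)]
        exact lintegral_const_mul_le _ _
    _ ≤ ∫⁻ t in S, ‖(|t - x|⁻¹ : ℝ) • f t‖ₑ ^ 2 ∂μ := by
        refine lintegral_mono_ae ?_
        filter_upwards [ae_restrict_mem hS,
          ae_restrict_of_ae (measure_eq_zero_iff_ae_notMem.1 (measure_singleton x))]
          with t htS htx
        rw [enorm_abs_sub_inv_smul htx]
        gcongr
        exact hf t htS

theorem setLIntegral_inv_edist_sq_eq_top {S : Set ℝ} {x : ℝ}
    (hx : Tendsto (fun r => volume (S ∩ closedBall x r) / volume (closedBall x r)) (𝓝[>] 0)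
      (𝓝 1)) :
    ∫⁻ t in S, (edist t x)⁻¹ ^ 2 = ∞ := by
  have hbound : ∀ᶠ r in 𝓝[>] 0, (ENNReal.ofReal r)⁻¹ ≤ ∫⁻ t in S, (edist t x)⁻¹ ^ 2 := by
    filter_upwards [hx.eventually (eventually_gt_nhds (by norm_num : (2⁻¹ : ℝ≥0∞) < 1)),
      self_mem_nhdsWithin] with r hr (hr0 : 0 < r)
    have hr' : ENNReal.ofReal r ≠ 0 := ENNReal.ofReal_ne_zero_iff.2 hr0
    have hvol : ENNReal.ofReal r ≤ volume (S ∩ closedBall x r) := by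
      rw [Real.volume_closedBall, ENNReal.ofReal_mul zero_le_two, ENNReal.ofReal_ofNat,
        ENNReal.lt_div_iff_mul_lt (by simp [hr']) (by simp), ← mul_assoc,
        ENNReal.inv_mul_cancel two_ne_zero ENNReal.ofNat_ne_top, one_mul] at hr
      exact hr.le
    have hball : (closedBall x r).indicator (fun _ => (ENNReal.ofReal r)⁻¹ ^ 2) ≤
        fun t => (edist t x)⁻¹ ^ 2 := by
      refine indicator_le fun t ht => ?_
      gcongr
      exact edist_le_ofReal hr0.le |>.2 ht
    calc (ENNReal.ofReal r)⁻¹ = (ENNReal.ofReal r)⁻¹ ^ 2 * ENNReal.ofReal r := by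
          rw [pow_two, mul_assoc, ENNReal.inv_mul_cancel hr' ENNReal.ofReal_ne_top, mul_one]
      _ ≤ (ENNReal.ofReal r)⁻¹ ^ 2 * volume (S ∩ closedBall x r) := by gcongr
      _ = ∫⁻ t in S, (closedBall x r).indicator (fun _ => (ENNReal.ofReal r)⁻¹ ^ 2) t := by
          rw [lintegral_indicator_const measurableSet_closedBall,
            Measure.restrict_apply measurableSet_closedBall, inter_comm]
      _ ≤ ∫⁻ t in S, (edist t x)⁻¹ ^ 2 := lintegral_mono hball
  have hlim : Tendsto (fun r => (ENNReal.ofReal r)⁻¹) (𝓝[>] 0) (𝓝 ∞) := by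
    simpa using (ENNReal.tendsto_ofReal
      (tendsto_nhdsWithin_of_tendsto_nhds tendsto_id (a := (0 : ℝ)))).inv
  exact top_le_iff.1 (le_of_tendsto hlim hbound)

theorem stmt_12
    (μ : Measure ℝ) (hμ : μ = volume.restrict (Set.Icc (0:ℝ) 1))
    (ξ : ℝ → ℂ) (hξ : MemLp ξ 2 μ)
    (hL2 : ∀ lam ∈ Set.Icc (0:ℝ) 1,
      MemLp (fun t => (|t - lam|⁻¹ : ℝ) • ξ t) 2 μ) :
    ξ =ᵐ[μ] 0 := by
  by_contra hne
  obtain ⟨ξ', hξ'm, hξξ'⟩ := hξ.aestronglyMeasurable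
  obtain ⟨ε, hε, hlevel⟩ := exists_measure_setOf_le_enorm_ne_zero fun h => hne (hξξ'.trans h)
  set S := {t | ε ≤ ‖ξ' t‖ₑ} ∩ Icc 0 1
  have hSm : MeasurableSet S :=
    (measurableSet_le measurable_const hξ'm.measurable.enorm).inter measurableSet_Icc
  have hSvol : volume S ≠ 0 := by rwa [hμ, Measure.restrict_apply' measurableSet_Icc] at hlevel
  obtain ⟨lam, ⟨-, hlam⟩, hdens⟩ :=
    Measure.exists_mem_of_measure_ne_zero_of_ae hSvol
      (Besicovitch.ae_tendsto_measure_inter_div volume S)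
  have hfin : ∫⁻ t, ‖(|t - lam|⁻¹ : ℝ) • ξ t‖ₑ ^ 2 ∂μ ≠ ∞ := by
    simpa using (lintegral_rpow_enorm_lt_top_of_eLpNorm_lt_top two_ne_zero ENNReal.ofNat_ne_top
      (hL2 lam hlam).2).ne
  have hlow : ε ^ 2 * ∫⁻ t in S, (edist t lam)⁻¹ ^ 2 ≤
      ∫⁻ t, ‖(|t - lam|⁻¹ : ℝ) • ξ t‖ₑ ^ 2 ∂μ :=
    calc ε ^ 2 * ∫⁻ t in S, (edist t lam)⁻¹ ^ 2
        ≤ ∫⁻ t in S, ‖(|t - lam|⁻¹ : ℝ) • ξ' t‖ₑ ^ 2 ∂μ := by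
          rw [hμ, Measure.restrict_restrict_of_subset inter_subset_right]
          exact mul_setLIntegral_inv_edist_sq_le hSm (fun t ht => ht.1) lam
      _ ≤ ∫⁻ t, ‖(|t - lam|⁻¹ : ℝ) • ξ' t‖ₑ ^ 2 ∂μ := setLIntegral_le_lintegral _ _
      _ = ∫⁻ t, ‖(|t - lam|⁻¹ : ℝ) • ξ t‖ₑ ^ 2 ∂μ :=
          lintegral_congr_ae (hξξ'.mono fun t ht => by simp only [ht])
  rw [setLIntegral_inv_edist_sq_eq_top hdens, ENNReal.mul_top (pow_ne_zero 2 hε)] at hlow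
  exact hfin (top_le_iff.1 hlow)
end

section
/- If ξ ∈ L²([0,1],ℂ) satisfies f_λ⁴ ξ ∈ L²([0,1],ℂ) for every λ ∈ [0,1], where f_λ(t) = |t-λ|^{-1/4}, then ξ = 0 in L². -/
open MeasureTheory Metric Set Filter Topology
open scoped ENNReal

/-!
The hypothesis says that `∫_{[0,1]} |ξ t|² / |t - λ|² dt < ∞` for every `λ ∈ [0,1]`. If `ξ` were not
a.e. zero, then `|ξ| ≥ ε` on a set `A ⊆ [0,1]` of positive measure. At a Lebesgue density point `λ`
of `A`, the set `A` fills more than half of `[λ - r, λ + r]` for small `r`, so the integral of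
`|t - λ|⁻²` over `A` is at least `r⁻² · r = r⁻¹` for all small `r`, hence infinite.
-/

lemma rpow_neg_one_div_four_pow_four {x : ℝ} (hx : 0 ≤ x) : (x ^ (-(1 / 4 : ℝ))) ^ 4 = x⁻¹ := by
  rw [← Real.rpow_natCast, ← Real.rpow_mul hx]
  norm_num [Real.rpow_neg_one]

lemma exists_measure_inv_nat_le_ne_zero {α : Type*} [MeasurableSpace α] {μ : Measure α}
    {g : α → ℝ≥0∞} (h : ¬ g =ᵐ[μ] 0) : ∃ n : ℕ, μ {t | (n : ℝ≥0∞)⁻¹ ≤ g t} ≠ 0 := by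
  contrapose! h
  refine measure_mono_null (fun t (ht : g t ≠ 0) => ?_) (measure_iUnion_null h)
  exact mem_iUnion.2 ((ENNReal.exists_inv_nat_lt ht).imp fun _ => le_of_lt)

lemma lintegral_inv_enorm_sub_sq_eq_top {s : Set ℝ} {x : ℝ}
    (h : Tendsto (fun r => volume (s ∩ closedBall x r) / volume (closedBall x r)) (𝓝[>] 0) (𝓝 1)) :
    ∫⁻ t in s, ‖t - x‖ₑ⁻¹ ^ 2 = ∞ := by
  have hbound : ∀ᶠ r in 𝓝[>] (0 : ℝ), ENNReal.ofReal r⁻¹ ≤ ∫⁻ t in s, ‖t - x‖ₑ⁻¹ ^ 2 := by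
    filter_upwards [h.eventually (lt_mem_nhds ENNReal.one_half_lt_one), self_mem_nhdsWithin]
      with r hr (hr0 : 0 < r)
    have hvol : ENNReal.ofReal r ≤ volume (closedBall x r ∩ s) := by
      have hball : volume (closedBall x r) = ENNReal.ofReal (2 * r) := Real.volume_closedBall x r
      rw [ENNReal.lt_div_iff_mul_lt (by simp [hball, hr0]) (by simp [hball]), hball,
        ENNReal.ofReal_mul zero_le_two, ← mul_assoc, ENNReal.ofReal_ofNat,
        ENNReal.inv_mul_cancel two_ne_zero ENNReal.ofNat_ne_top, one_mul, inter_comm] at hr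
      exact hr.le
    have hpt : (closedBall x r).indicator (fun _ => ENNReal.ofReal (r⁻¹ ^ 2)) ≤
        fun t => ‖t - x‖ₑ⁻¹ ^ 2 := by
      intro t
      by_cases ht : t ∈ closedBall x r
      · have hdist : ‖t - x‖ₑ ≤ ENNReal.ofReal r := by
          rw [Real.enorm_eq_ofReal_abs, ← Real.dist_eq]
          exact ENNReal.ofReal_le_ofReal ht
        rw [indicator_of_mem ht, ENNReal.ofReal_pow (by positivity), ENNReal.ofReal_inv_of_pos hr0]
        exact pow_le_pow_left₀ zero_le (ENNReal.inv_le_inv.2 hdist) 2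
      · simp [ht]
    calc ENNReal.ofReal r⁻¹ = ENNReal.ofReal (r⁻¹ ^ 2) * ENNReal.ofReal r := by
          rw [← ENNReal.ofReal_mul (by positivity)]; field_simp
      _ ≤ ENNReal.ofReal (r⁻¹ ^ 2) * volume (closedBall x r ∩ s) := by gcongr
      _ = ∫⁻ t in s, (closedBall x r).indicator (fun _ => ENNReal.ofReal (r⁻¹ ^ 2)) t := by
          rw [lintegral_indicator_const measurableSet_closedBall,
            Measure.restrict_apply measurableSet_closedBall]
      _ ≤ _ := lintegral_mono hpt
  have hinv : Tendsto (fun r : ℝ => ENNReal.ofReal r⁻¹) (𝓝[>] 0) (𝓝 ∞) :=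
    ENNReal.tendsto_ofReal_atTop.comp tendsto_inv_nhdsGT_zero
  exact top_le_iff.1 (le_of_tendsto hinv hbound)

theorem ae_eq_zero_of_lintegral_mul_inv_enorm_sub_sq_ne_top {g : ℝ → ℝ≥0∞} {s : Set ℝ}
    (hg : Measurable g) (hs : MeasurableSet s)
    (h : ∀ x ∈ s, ∫⁻ t in s, g t * ‖t - x‖ₑ⁻¹ ^ 2 ≠ ∞) : g =ᵐ[volume.restrict s] 0 := by
  by_contra hg0
  obtain ⟨n, hn⟩ := exists_measure_inv_nat_le_ne_zero hg0
  set A := {t | (n : ℝ≥0∞)⁻¹ ≤ g t} ∩ s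
  have hA : MeasurableSet A := (measurableSet_le measurable_const hg).inter hs
  rw [Measure.restrict_apply' hs] at hn
  have : (ae (volume.restrict A)).NeBot := ae_restrict_neBot.2 hn
  obtain ⟨x, hxA, hx⟩ :=
    ((ae_restrict_mem hA).and (Besicovitch.ae_tendsto_measure_inter_div volume A)).exists
  refine h x hxA.2 (top_le_iff.1 ?_)
  calc ∞ = (n : ℝ≥0∞)⁻¹ * ∫⁻ t in A, ‖t - x‖ₑ⁻¹ ^ 2 := by
        rw [lintegral_inv_enorm_sub_sq_eq_top hx,
          ENNReal.mul_top (ENNReal.inv_ne_zero.2 (ENNReal.natCast_ne_top n))]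
    _ = ∫⁻ t in A, (n : ℝ≥0∞)⁻¹ * ‖t - x‖ₑ⁻¹ ^ 2 := (lintegral_const_mul _ (by fun_prop)).symm
    _ ≤ ∫⁻ t in A, g t * ‖t - x‖ₑ⁻¹ ^ 2 :=
        setLIntegral_mono (by fun_prop) fun t ht => mul_le_mul_left ht.1 _
    _ ≤ ∫⁻ t in s, g t * ‖t - x‖ₑ⁻¹ ^ 2 := lintegral_mono_set inter_subset_right

theorem stmt_13
    (μ : Measure ℝ) (hμ : μ = volume.restrict (Set.Icc (0:ℝ) 1))
    (ξ : ℝ → ℂ) (hξ : MemLp ξ 2 μ)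
    (hL2 : ∀ lam ∈ Set.Icc (0:ℝ) 1,
      MemLp (fun t => ((|t - lam| ^ (-(1/4 : ℝ))) ^ 4 : ℝ) • ξ t) 2 μ) :
    ξ =ᵐ[μ] 0 := by
  subst hμ
  have hmk := hξ.1.ae_eq_mk
  have hzero : (fun t => ‖hξ.1.mk ξ t‖ₑ ^ 2) =ᵐ[volume.restrict (Icc 0 1)] 0 := by
    refine ae_eq_zero_of_lintegral_mul_inv_enorm_sub_sq_ne_top
      (hξ.1.stronglyMeasurable_mk.measurable.enorm.pow_const 2) measurableSet_Icc fun x hx => ?_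
    have hfin := lintegral_rpow_enorm_lt_top_of_eLpNorm_lt_top two_ne_zero ENNReal.ofNat_ne_top
      (hL2 x hx).eLpNorm_lt_top
    refine ne_of_eq_of_ne (lintegral_congr_ae ?_) hfin.ne
    -- at `t = x` the two sides differ: `‖(0 : ℝ)⁻¹‖ₑ = 0` but `‖(0 : ℝ)‖ₑ⁻¹ = ∞`
    filter_upwards [hmk, ae_restrict_of_ae (Measure.ae_ne volume x)] with t ht htx
    rw [rpow_neg_one_div_four_pow_four (abs_nonneg _), enorm_smul,
      enorm_inv (abs_ne_zero.2 (sub_ne_zero.2 htx)), Real.enorm_abs, ← ht, ENNReal.toReal_ofNat,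
      ENNReal.rpow_two, mul_pow, mul_comm]
  filter_upwards [hmk, hzero] with t ht ht0
  simpa [ht] using ht0
end

section
/- Fix λ ∈ [0,1] and set f_λ(t) = |t-λ|^{-1/4}. If ξ ∈ L²([0,1],ℂ) is such that the map t ↦ e^{i t f_λ} ξ from ℝ to L²([0,1],ℂ) is four times differentiable at 0, then f_λ⁴ ξ ∈ L²([0,1],ℂ). -/
/-!
The `n`-th forward difference of `F` with step `h` at `0` is, pointwise, `(e^{ihg} - 1)^n ξ`.
Since `F` is `Cⁿ` near `0`, iterating the mean value inequality bounds its norm by `C |h|^n`, so the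
quotients `h^{-n} (e^{ihg} - 1)^n ξ` stay bounded in `Lᵖ`; they converge pointwise to `(ig)^n ξ`
as `h → 0`, and Fatou's lemma puts the limit in `Lᵖ`.
-/

open Filter Topology MeasureTheory Complex
open scoped fwdDiff ENNReal

section FiniteDifference

variable {E : Type*} [NormedAddCommGroup E] [NormedSpace ℝ E]

theorem HasDerivAt.fwdDiff_iter {F F' : ℝ → E} {h y : ℝ} {n : ℕ}
    (hF : ∀ k ≤ n, HasDerivAt F (F' (y + k * h)) (y + k * h)) :
    HasDerivAt (Δ_[h] ^[n] F) (Δ_[h] ^[n] F' y) y := by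
  have hsum : Δ_[h] ^[n] F = fun z => ∑ k ∈ Finset.range (n + 1),
      ((-1 : ℤ) ^ (n - k) * n.choose k) • F (z + k * h) := by
    ext z
    simp only [fwdDiff_iter_eq_sum_shift, nsmul_eq_mul]
  rw [hsum, fwdDiff_iter_eq_sum_shift]
  simp only [nsmul_eq_mul]
  refine HasDerivAt.fun_sum fun k hk =>
    ((hF k ?_).comp_add_const y _).const_smul ((-1 : ℤ) ^ (n - k) * n.choose k)
  exact Nat.lt_succ_iff.mp (Finset.mem_range.mp hk)

theorem Convex.add_mul_mem {s : Set ℝ} (hs : Convex ℝ s) {x h a c : ℝ} (hx : x ∈ s)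
    (hxh : x + c * h ∈ s) (ha₀ : 0 ≤ a) (hac : a ≤ c) : x + a * h ∈ s := by
  rcases ha₀.eq_or_lt with rfl | ha
  · simpa using hx
  have hc : 0 < c := ha.trans_le hac
  convert hs.add_smul_mem hx hxh ⟨div_nonneg ha₀ hc.le, (div_le_one hc).2 hac⟩ using 1
  rw [smul_eq_mul]
  field_simp

theorem Convex.norm_fwdDiff_iter_le {s : Set ℝ} (hs : Convex ℝ s) (hso : IsOpen s) {n : ℕ}
    {F : ℝ → E} (hF : ContDiffOn ℝ n F s) {C : ℝ} (hC : ∀ y ∈ s, ‖iteratedDeriv n F y‖ ≤ C)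
    {x h : ℝ} (hx : x ∈ s) (hxh : x + n * h ∈ s) :
    ‖Δ_[h] ^[n] F x‖ ≤ C * |h| ^ n := by
  induction n generalizing F x with
  | zero => simpa using hC x hx
  | succ n ih =>
    have mem : ∀ θ ∈ Set.Icc (0 : ℝ) 1, ∀ a ∈ Set.Icc (0 : ℝ) n, x + θ * h + a * h ∈ s := by
      rintro θ ⟨hθ₀, hθ₁⟩ a ⟨ha₀, ha₁⟩
      rw [add_assoc, ← add_mul]
      exact hs.add_mul_mem hx hxh (by positivity) (by push_cast; linarith)
    have hderiv : ∀ y ∈ s, HasDerivAt F (deriv F y) y := fun y hy =>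
      ((hF.differentiableOn (by simp)).differentiableAt (hso.mem_nhds hy)).hasDerivAt
    have hF' : ContDiffOn ℝ n (deriv F) s := hF.deriv_of_isOpen hso (by push_cast; rfl)
    have hC' : ∀ y ∈ s, ‖iteratedDeriv n (deriv F) y‖ ≤ C := by
      simpa only [← iteratedDeriv_succ'] using hC
    have hseg : ∀ y ∈ segment ℝ x (x + h), ∃ θ ∈ Set.Icc (0 : ℝ) 1, y = x + θ * h := by
      intro y hy
      rw [segment_eq_image'] at hy
      obtain ⟨θ, hθ, rfl⟩ := hy
      exact ⟨θ, hθ, by simp⟩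
    have hmvt := (convex_segment x (x + h)).norm_image_sub_le_of_norm_hasDerivWithin_le
      (f := Δ_[h] ^[n] F) (f' := Δ_[h] ^[n] (deriv F)) (C := C * |h| ^ n)
      (fun y hy => by
        obtain ⟨θ, hθ, rfl⟩ := hseg y hy
        refine (HasDerivAt.fwdDiff_iter fun k hk => hderiv _ ?_).hasDerivWithinAt
        exact mem θ hθ k ⟨k.cast_nonneg, by exact_mod_cast hk⟩)
      (fun y hy => by
        obtain ⟨θ, hθ, rfl⟩ := hseg y hy
        exact ih hF' hC' (by simpa using mem θ hθ 0 ⟨le_rfl, n.cast_nonneg⟩)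
          (mem θ hθ n ⟨n.cast_nonneg, le_rfl⟩))
      (left_mem_segment ℝ x (x + h)) (right_mem_segment ℝ x (x + h))
    calc ‖Δ_[h] ^[n + 1] F x‖ = ‖Δ_[h] ^[n] F (x + h) - Δ_[h] ^[n] F x‖ := by
          rw [Function.iterate_succ_apply', fwdDiff]
      _ ≤ C * |h| ^ n * ‖x + h - x‖ := hmvt
      _ = C * |h| ^ (n + 1) := by rw [add_sub_cancel_left, Real.norm_eq_abs]; ring

theorem ContDiffAt.isBigO_fwdDiff_iter {n : ℕ} {F : ℝ → E} {x : ℝ} (hF : ContDiffAt ℝ n F x) :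
    (fun h => Δ_[h] ^[n] F x) =O[𝓝 0] (fun h => h ^ n) := by
  obtain ⟨u, hu, hFu⟩ := hF.contDiffOn le_rfl (by simp)
  set C := ‖iteratedFDeriv ℝ n F x‖ + 1
  have hcont : ContinuousAt (fun y => ‖iteratedFDeriv ℝ n F y‖) x :=
    (hF.iteratedFDeriv_right (m := 0) (by simp)).continuousAt.norm
  have hv : ∀ᶠ y in 𝓝 x, ‖iteratedFDeriv ℝ n F y‖ < C :=
    hcont.eventually_lt_const (lt_add_one _)
  obtain ⟨ε, hε, hball⟩ := Metric.mem_nhds_iff.1 (inter_mem hu hv)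
  refine Asymptotics.IsBigO.of_bound C ?_
  filter_upwards [Metric.ball_mem_nhds (0 : ℝ) (div_pos hε n.cast_add_one_pos)] with h hh
  rw [Metric.mem_ball, dist_zero_right, Real.norm_eq_abs, lt_div_iff₀ n.cast_add_one_pos] at hh
  rw [norm_pow, Real.norm_eq_abs]
  refine (convex_ball x ε).norm_fwdDiff_iter_le Metric.isOpen_ball
    (hFu.mono fun y hy => (hball hy).1) (fun y hy => ?_) (Metric.mem_ball_self hε) ?_
  · rw [← norm_iteratedFDeriv_eq_norm_iteratedDeriv]; exact (hball hy).2.le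
  · rw [Metric.mem_ball, dist_eq_norm, add_sub_cancel_left, Real.norm_eq_abs, abs_mul,
      Nat.abs_cast]
    nlinarith [abs_nonneg h]

end FiniteDifference

theorem tendsto_inv_smul_cexp_mul_I_sub_one (a : ℝ) :
    Tendsto (fun t : ℝ => t⁻¹ • (exp (I * (t * a)) - 1)) (𝓝[≠] 0) (𝓝 (I * a)) := by
  have hderiv : HasDerivAt (fun t : ℝ => exp (I * (t * a))) (I * a) 0 := by
    simpa using (((hasDerivAt_id (0 : ℝ)).ofReal_comp.mul_const (a : ℂ)).const_mul I).cexp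
  simpa using hderiv.tendsto_slope_zero

section Lp

variable {α E : Type*} [MeasurableSpace α] {μ : Measure α} {p : ℝ≥0∞}
  [NormedAddCommGroup E] [NormedSpace ℂ E]

theorem coeFn_fwdDiff_iter_cexp_smul {g : α → ℝ} {ξ : Lp E p μ} {F : ℝ → Lp E p μ}
    (hF : ∀ t : ℝ, (F t : α → E) =ᵐ[μ] fun s => exp (I * (t * g s)) • ξ s) (h : ℝ) (n : ℕ)
    (x : ℝ) :
    ((Δ_[h] ^[n] F x : Lp E p μ) : α → E) =ᵐ[μ]
      fun s => (exp (I * (x * g s)) * (exp (I * (h * g s)) - 1) ^ n) • ξ s := by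
  induction n generalizing x with
  | zero => simpa using hF x
  | succ n ih =>
    rw [Function.iterate_succ_apply', fwdDiff]
    filter_upwards [Lp.coeFn_sub (Δ_[h] ^[n] F (x + h)) (Δ_[h] ^[n] F x), ih (x + h), ih x]
      with s hsub hxh hx
    rw [hsub, Pi.sub_apply, hxh, hx, ← sub_smul]
    congr 1
    push_cast
    rw [add_mul, mul_add, exp_add]
    ring

variable [Fact (1 ≤ p)]

theorem memLp_pow_smul_of_contDiffAt_cexp_smul {g : α → ℝ} {ξ : Lp E p μ} {F : ℝ → Lp E p μ}
    {n : ℕ} (hF : ∀ t : ℝ, (F t : α → E) =ᵐ[μ] fun s => exp (I * (t * g s)) • ξ s)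
    (hdiff : ContDiffAt ℝ n F 0) :
    MemLp (fun s => (g s ^ n : ℝ) • ξ s) p μ := by
  obtain ⟨C, hC⟩ := hdiff.isBigO_fwdDiff_iter.bound
  set Q : ℝ → α → E := fun h s => (h⁻¹ • (exp (I * (h * g s)) - 1)) ^ n • ξ s
  have hQ : ∀ h, Q h =ᵐ[μ] ((h⁻¹ ^ n) • Δ_[h] ^[n] F 0 : Lp E p μ) := fun h => by
    filter_upwards [Lp.coeFn_smul (h⁻¹ ^ n) (Δ_[h] ^[n] F 0),
      coeFn_fwdDiff_iter_cexp_smul hF h n 0] with s hsmul hΔ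
    rw [hsmul, Pi.smul_apply, hΔ]
    simp only [Q, ofReal_zero, zero_mul, mul_zero, Complex.exp_zero, one_mul, smul_pow, smul_assoc]
  have hlim : ∀ s, Tendsto (fun h => Q h s) (𝓝[≠] 0) (𝓝 ((I * g s) ^ n • ξ s)) := fun s =>
    ((tendsto_inv_smul_cexp_mul_I_sub_one (g s)).pow n).smul_const _
  have hbound : ∀ᶠ h in 𝓝[≠] 0, eLpNorm (Q h) p μ ≤ ENNReal.ofReal C := by
    filter_upwards [nhdsWithin_le_nhds hC, self_mem_nhdsWithin] with h hh hne
    rw [eLpNorm_congr_ae (hQ h), ← Lp.enorm_def, ← ofReal_norm]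
    refine ENNReal.ofReal_le_ofReal ?_
    rw [norm_smul, norm_pow, norm_inv]
    calc ‖h‖⁻¹ ^ n * ‖Δ_[h] ^[n] F 0‖ ≤ ‖h‖⁻¹ ^ n * (C * ‖h ^ n‖) := by gcongr
      _ = C * (‖h‖⁻¹ * ‖h‖) ^ n := by rw [norm_pow, mul_pow]; ring
      _ = C := by rw [inv_mul_cancel₀ (norm_ne_zero_iff.2 hne), one_pow, mul_one]
  have hQm : ∀ h, AEStronglyMeasurable (Q h) μ := fun h =>
    (Lp.aestronglyMeasurable _).congr (hQ h).symm
  have hmem : MemLp (fun s => (I * g s) ^ n • ξ s) p μ :=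
    ⟨aestronglyMeasurable_of_tendsto_ae _ hQm (ae_of_all _ hlim),
      (Lp.eLpNorm_le_of_ae_tendsto hbound hQm (ae_of_all _ hlim)).trans_lt ENNReal.ofReal_lt_top⟩
  convert hmem.const_smul ((-I) ^ n) using 1
  ext s
  rw [Pi.smul_apply, smul_smul, ← mul_pow, ← mul_assoc, neg_mul, I_mul_I, neg_neg, one_mul,
    ← ofReal_pow, Complex.coe_smul]

end Lp

theorem stmt_16_general
    (μ : Measure ℝ)
    (lam : ℝ)
    (ξ : Lp ℂ 2 μ) (F : ℝ → Lp ℂ 2 μ)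
    (hF : ∀ t : ℝ, (F t : ℝ → ℂ) =ᵐ[μ]
      fun s => Complex.exp (Complex.I * (t * ((|s - lam| ^ (-(1/4 : ℝ)) : ℝ) : ℂ))) * (ξ : ℝ → ℂ) s)
    (hdiff : ContDiffAt ℝ 4 F 0) :
    MemLp (fun s => ((|s - lam| ^ (-(1/4 : ℝ))) ^ 4 : ℝ) • (ξ : ℝ → ℂ) s) 2 μ :=
  memLp_pow_smul_of_contDiffAt_cexp_smul (n := 4) hF hdiff

theorem stmt_16
    (μ : Measure ℝ) (hμ : μ = volume.restrict (Set.Icc (0:ℝ) 1))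
    (lam : ℝ) (hlam : lam ∈ Set.Icc (0:ℝ) 1)
    (ξ : Lp ℂ 2 μ) (F : ℝ → Lp ℂ 2 μ)
    (hF : ∀ t : ℝ, (F t : ℝ → ℂ) =ᵐ[μ]
      fun s => Complex.exp (Complex.I * (t * ((|s - lam| ^ (-(1/4 : ℝ)) : ℝ) : ℂ))) * (ξ : ℝ → ℂ) s)
    (hdiff : ContDiffAt ℝ 4 F 0) :
    MemLp (fun s => ((|s - lam| ^ (-(1/4 : ℝ))) ^ 4 : ℝ) • (ξ : ℝ → ℂ) s) 2 μ :=
  stmt_16_general μ lam ξ F hF hdiff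
end
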